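/- Let θ ∈ (0,π) and φ ∈ ℝ with cos φ > 0, and set λ_+ = λ_+(θ,φ) = (1/√3)(cos(θ/2) + e^{iφ} sin(θ/2)). Then as m → ∞: (i) λ_+^{−m}·a_z(θ,φ)^m converges to the rank-one projector |+⟩⟨+| = (1/2)[[1,1],[1,1]]; and (ii) λ_+^{−2m}·a_z(θ,φ)^m·a_x(θ,φ)·a_z(θ,φ)^m and λ_+^{−2m}·a_z(θ,φ)^m·a_y(θ,φ)·a_z(θ,φ)^m both converge to the common limit (1/√3)(cos(θ/2) − (1/2) e^{iφ} sin(θ/2))·|+⟩⟨+|. -/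

import Mathlib

open Matrix Filter Real

noncomputable section

/-- Pauli matrix σ_x. -/
def σx : Matrix (Fin 2) (Fin 2) ℂ := !![0, 1; 1, 0]
/-- Pauli matrix σ_y. -/
def σy : Matrix (Fin 2) (Fin 2) ℂ := !![0, -Complex.I; Complex.I, 0]

/-- Toy-model junk-space operator `a_x(θ,φ)`. -/
def ax (θ φ : ℝ) : Matrix (Fin 2) (Fin 2) ℂ :=
  ((1 / Real.sqrt 3 : ℝ) : ℂ) •
    ((Real.cos (θ / 2) : ℂ) • (1 : Matrix (Fin 2) (Fin 2) ℂ)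
      + (Complex.exp (Complex.I * φ) * (Real.sin (θ / 2) : ℂ)) •
        ((-(1 / 2 : ℂ)) • σx + ((Real.sqrt 3 / 2 : ℝ) : ℂ) • σy))

/-- Toy-model junk-space operator `a_y(θ,φ)`. -/
def ay (θ φ : ℝ) : Matrix (Fin 2) (Fin 2) ℂ :=
  ((1 / Real.sqrt 3 : ℝ) : ℂ) •
    ((Real.cos (θ / 2) : ℂ) • (1 : Matrix (Fin 2) (Fin 2) ℂ)
      + (Complex.exp (Complex.I * φ) * (Real.sin (θ / 2) : ℂ)) •
        ((-(1 / 2 : ℂ)) • σx - ((Real.sqrt 3 / 2 : ℝ) : ℂ) • σy))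

/-- Toy-model junk-space operator `a_z(θ,φ)`. -/
def az (θ φ : ℝ) : Matrix (Fin 2) (Fin 2) ℂ :=
  ((1 / Real.sqrt 3 : ℝ) : ℂ) •
    ((Real.cos (θ / 2) : ℂ) • (1 : Matrix (Fin 2) (Fin 2) ℂ)
      + (Complex.exp (Complex.I * φ) * (Real.sin (θ / 2) : ℂ)) • σx)

/-- `λ_+(θ,φ) = (1/√3)(cos(θ/2) + e^{iφ} sin(θ/2))`. -/
def lamPlus (θ φ : ℝ) : ℂ :=
  ((1 / Real.sqrt 3 : ℝ) : ℂ) *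
    ((Real.cos (θ / 2) : ℂ) + Complex.exp (Complex.I * φ) * (Real.sin (θ / 2) : ℂ))

/-- The rank-one projector `|+⟩⟨+| = (1/2)[[1,1],[1,1]]`. -/
def plusProj : Matrix (Fin 2) (Fin 2) ℂ := (1 / 2 : ℂ) • !![1, 1; 1, 1]

/-! `a_z = λ₊ P + λ₋ (1 - P)` with `P = |+⟩⟨+|` idempotent, and `|λ₋| < |λ₊|` because
`|c + e s|² - |c - e s|² = 4 c s cos φ > 0` for `c = cos(θ/2)`, `s = sin(θ/2)`, `e = e^{iφ}`.
Hence `λ₊⁻ᵐ a_zᵐ = P + (λ₋/λ₊)ᵐ (1 - P) → P`, and `λ₊⁻²ᵐ a_zᵐ B a_zᵐ` is `B` sandwiched between two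
such factors, so it tends to `P B P`. Finally `P σ_x P = P` and `P σ_y P = 0` evaluate `P a_x P`
and `P a_y P`. -/

open scoped ComplexConjugate Topology

section IdempotentSplitting

variable {R A : Type*} [CommRing R] [Ring A] [Algebra R A] {P : A}

theorem IsIdempotentElem.smul_add_smul_one_sub_mul (hP : IsIdempotentElem P) (a b c d : R) :
    (a • P + b • (1 - P)) * (c • P + d • (1 - P)) = (a * c) • P + (b * d) • (1 - P) := by
  simp only [add_mul, mul_add, smul_mul_smul_comm, hP.eq, hP.one_sub.eq, hP.mul_one_sub_self,
    hP.one_sub_mul_self, smul_zero, add_zero, zero_add]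

theorem IsIdempotentElem.smul_add_smul_one_sub_pow (hP : IsIdempotentElem P) (a b : R) (m : ℕ) :
    (a • P + b • (1 - P)) ^ m = a ^ m • P + b ^ m • (1 - P) := by
  induction m with
  | zero => simp
  | succ m ih => rw [pow_succ, ih, hP.smul_add_smul_one_sub_mul, pow_succ, pow_succ]

end IdempotentSplitting

section DominantEigenvalue

variable {𝕜 A : Type*} [NormedField 𝕜] [Ring A] [Algebra 𝕜 A] [TopologicalSpace A]
  [ContinuousSMul 𝕜 A] {P : A} {a b : 𝕜}

theorem IsIdempotentElem.tendsto_inv_pow_smul_pow [ContinuousAdd A] (hP : IsIdempotentElem P)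
    (hab : ‖b‖ < ‖a‖) :
    Tendsto (fun m : ℕ => (a ^ m)⁻¹ • (a • P + b • (1 - P)) ^ m) atTop (𝓝 P) := by
  have ha : a ≠ 0 := norm_pos_iff.mp ((norm_nonneg b).trans_lt hab)
  have hratio : ‖b / a‖ < 1 := by
    rwa [norm_div, div_lt_one ((norm_nonneg b).trans_lt hab)]
  have hsplit : ∀ m : ℕ, (a ^ m)⁻¹ • (a • P + b • (1 - P)) ^ m = P + (b / a) ^ m • (1 - P) := by
    intro m
    rw [hP.smul_add_smul_one_sub_pow, smul_add, smul_smul, smul_smul,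
      inv_mul_cancel₀ (pow_ne_zero m ha), one_smul, div_pow, div_eq_inv_mul]
  simp only [hsplit]
  simpa using ((tendsto_pow_atTop_nhds_zero_of_norm_lt_one hratio).smul_const (1 - P)).const_add P

theorem IsIdempotentElem.tendsto_inv_pow_two_mul_smul_pow_mul_mul_pow [ContinuousAdd A]
    [ContinuousMul A] (hP : IsIdempotentElem P) (hab : ‖b‖ < ‖a‖) (B : A) :
    Tendsto (fun m : ℕ => (a ^ (2 * m))⁻¹ •
      ((a • P + b • (1 - P)) ^ m * B * (a • P + b • (1 - P)) ^ m)) atTop (𝓝 (P * B * P)) := by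
  refine (((hP.tendsto_inv_pow_smul_pow hab).mul_const B).mul
    (hP.tendsto_inv_pow_smul_pow hab)).congr fun m => ?_
  rw [two_mul, pow_add, mul_inv, mul_smul, smul_mul_assoc, smul_mul_assoc, mul_smul_comm]

end DominantEigenvalue

theorem Complex.norm_sub_lt_norm_add {z w : ℂ} (h : 0 < (z * conj w).re) : ‖z - w‖ < ‖z + w‖ := by
  refine lt_of_pow_lt_pow_left₀ 2 (norm_nonneg _) ?_
  rw [Complex.sq_norm, Complex.sq_norm, Complex.normSq_sub, Complex.normSq_add]
  linarith

def lamMinus (θ φ : ℝ) : ℂ :=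
  ((1 / Real.sqrt 3 : ℝ) : ℂ) *
    ((Real.cos (θ / 2) : ℂ) - Complex.exp (Complex.I * φ) * (Real.sin (θ / 2) : ℂ))

theorem norm_lamMinus_lt_norm_lamPlus {θ φ : ℝ} (hθ : θ ∈ Set.Ioo 0 π) (hφ : 0 < Real.cos φ) :
    ‖lamMinus θ φ‖ < ‖lamPlus θ φ‖ := by
  have hcos : 0 < Real.cos (θ / 2) :=
    Real.cos_pos_of_mem_Ioo ⟨by linarith [hθ.1, Real.pi_pos], by linarith [hθ.2]⟩
  have hsin : 0 < Real.sin (θ / 2) :=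
    Real.sin_pos_of_pos_of_lt_pi (by linarith [hθ.1]) (by linarith [hθ.2, Real.pi_pos])
  have hre : ((Real.cos (θ / 2) : ℂ) *
      conj (Complex.exp (Complex.I * φ) * (Real.sin (θ / 2) : ℂ))).re
      = Real.cos (θ / 2) * Real.sin (θ / 2) * Real.cos φ := by
    rw [map_mul, Complex.conj_ofReal, Complex.re_ofReal_mul, Complex.re_mul_ofReal,
      Complex.conj_re, mul_comm Complex.I, Complex.exp_ofReal_mul_I_re]
    ring
  rw [lamMinus, lamPlus, norm_mul, norm_mul]
  refine mul_lt_mul_of_pos_left (Complex.norm_sub_lt_norm_add ?_) (by simp)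
  rw [hre]
  positivity

theorem isIdempotentElem_plusProj : IsIdempotentElem plusProj := by
  ext i j
  fin_cases i <;> fin_cases j <;> simp [plusProj] <;> norm_num

theorem az_eq_smul_plusProj_add_smul_one_sub (θ φ : ℝ) :
    az θ φ = lamPlus θ φ • plusProj + lamMinus θ φ • (1 - plusProj) := by
  ext i j
  fin_cases i <;> fin_cases j <;> simp [az, lamPlus, lamMinus, plusProj, σx] <;> ring

theorem plusProj_mul_σx_mul_plusProj : plusProj * σx * plusProj = plusProj := by
  ext i j
  fin_cases i <;> fin_cases j <;> simp [plusProj, σx] <;> norm_num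

theorem plusProj_mul_σy_mul_plusProj : plusProj * σy * plusProj = 0 := by
  ext i j
  fin_cases i <;> fin_cases j <;> simp [plusProj, σy]

theorem plusProj_mul_ax_mul_plusProj (θ φ : ℝ) :
    plusProj * ax θ φ * plusProj
      = (((1 / Real.sqrt 3 : ℝ) : ℂ) *
          ((Real.cos (θ / 2) : ℂ) - (1 / 2 : ℂ) * Complex.exp (Complex.I * φ)
            * (Real.sin (θ / 2) : ℂ))) • plusProj := by
  simp only [ax, Matrix.mul_add, Matrix.add_mul, Matrix.mul_smul, Matrix.smul_mul, mul_one,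
    isIdempotentElem_plusProj.eq, plusProj_mul_σx_mul_plusProj, plusProj_mul_σy_mul_plusProj,
    smul_zero, add_zero]
  module

theorem plusProj_mul_ay_mul_plusProj (θ φ : ℝ) :
    plusProj * ay θ φ * plusProj
      = (((1 / Real.sqrt 3 : ℝ) : ℂ) *
          ((Real.cos (θ / 2) : ℂ) - (1 / 2 : ℂ) * Complex.exp (Complex.I * φ)
            * (Real.sin (θ / 2) : ℂ))) • plusProj := by
  simp only [ay, Matrix.mul_add, Matrix.add_mul, Matrix.mul_sub, Matrix.sub_mul, Matrix.mul_smul,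
    Matrix.smul_mul, mul_one, isIdempotentElem_plusProj.eq, plusProj_mul_σx_mul_plusProj,
    plusProj_mul_σy_mul_plusProj, smul_zero, sub_zero]
  module

/-- For `θ ∈ (0,π)` and `cos φ > 0`: (i) `λ_+⁻ᵐ a_zᵐ → |+⟩⟨+|`; and (ii) the renormalized
    operators `λ_+⁻²ᵐ a_zᵐ a_x a_zᵐ` and `λ_+⁻²ᵐ a_zᵐ a_y a_zᵐ` converge to the common limit
    `(1/√3)(cos(θ/2) − (1/2)e^{iφ} sin(θ/2))·|+⟩⟨+|`. -/
theorem toy_model_rg_fixed_point (θ φ : ℝ) (hθ : θ ∈ Set.Ioo 0 π)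
    (hφ : Real.cos φ > 0) :
    Tendsto (fun m : ℕ => (lamPlus θ φ ^ m)⁻¹ • az θ φ ^ m) atTop (nhds plusProj)
    ∧ Tendsto (fun m : ℕ => (lamPlus θ φ ^ (2 * m))⁻¹ • (az θ φ ^ m * ax θ φ * az θ φ ^ m))
        atTop
        (nhds ((((1 / Real.sqrt 3 : ℝ) : ℂ) *
          ((Real.cos (θ / 2) : ℂ) - (1 / 2 : ℂ) * Complex.exp (Complex.I * φ)
            * (Real.sin (θ / 2) : ℂ))) • plusProj))
    ∧ Tendsto (fun m : ℕ => (lamPlus θ φ ^ (2 * m))⁻¹ • (az θ φ ^ m * ay θ φ * az θ φ ^ m))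
        atTop
        (nhds ((((1 / Real.sqrt 3 : ℝ) : ℂ) *
          ((Real.cos (θ / 2) : ℂ) - (1 / 2 : ℂ) * Complex.exp (Complex.I * φ)
            * (Real.sin (θ / 2) : ℂ))) • plusProj)) := by
  have hP := isIdempotentElem_plusProj
  have hlt := norm_lamMinus_lt_norm_lamPlus hθ hφ
  simp only [az_eq_smul_plusProj_add_smul_one_sub]
  refine ⟨hP.tendsto_inv_pow_smul_pow hlt, ?_, ?_⟩
  · simpa only [plusProj_mul_ax_mul_plusProj] using
      hP.tendsto_inv_pow_two_mul_smul_pow_mul_mul_pow hlt (ax θ φ)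
  · simpa only [plusProj_mul_ay_mul_plusProj] using
      hP.tendsto_inv_pow_two_mul_smul_pow_mul_mul_pow hlt (ay θ φ)

end
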